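/- arXiv:2102.11888 — 2 statements merged into one kernel-verified Lean document; each statement's English description precedes it below -/
import Mathlib

section
/- Let ζ : [r₀, ∞) → ℝ be continuously differentiable with lim_{r→∞} r ζ(r)² = 0. Then ∫_{r₀}^∞ ζ(r)² dr ≤ 4 ∫_{r₀}^∞ (r - r₀)² (ζ'(r))² dr. -/
/-!
Differentiating `(r - r₀) ζ(r)²` gives `ζ² + 2 (r - r₀) ζ ζ'`, and the cross term is at least
`-ζ²/2 - 2 (r - r₀)² ζ'²`. Integrating over `[r₀, R]` therefore bounds `∫_{r₀}^R ζ²` by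
`2 (R - r₀) ζ(R)² + 4 ∫_{r₀}^R (r - r₀)² ζ'²`; the boundary term at `r₀` vanishes because of the
weight, and the one at `R` tends to `0` as `R → ∞`.
-/

open MeasureTheory Set Filter Topology
open scoped ENNReal

lemma tendsto_setLIntegral_Ioc_atTop {α : Type*} [LinearOrder α] [NoMaxOrder α]
    [IsCountablyGenerated (atTop : Filter α)] [MeasurableSpace α] {μ : Measure α} [SFinite μ]
    (f : α → ℝ≥0∞) (a : α) :
    Tendsto (fun b => ∫⁻ x in Ioc a b, f x ∂μ) atTop (𝓝 (∫⁻ x in Ioi a, f x ∂μ)) := by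
  simpa only [Function.comp_def, withDensity_apply', iUnion_Ioc_right] using
    tendsto_measure_iUnion_atTop (μ := μ.withDensity f) (s := fun b => Ioc a b)
      fun _ _ hbc => Ioc_subset_Ioc_right hbc

lemma tendsto_sub_mul_atTop_of_tendsto_mul {f : ℝ → ℝ} (c : ℝ)
    (hf : Tendsto (fun r => r * f r) atTop (𝓝 0)) :
    Tendsto (fun r => (r - c) * f r) atTop (𝓝 0) := by
  have hf₀ : Tendsto f atTop (𝓝 0) := by
    have h := hf.mul tendsto_inv_atTop_zero
    rw [zero_mul] at h
    refine h.congr' ?_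
    filter_upwards [eventually_ne_atTop 0] with r hr
    field_simp
  simpa only [sub_mul, mul_zero, sub_zero] using hf.sub (hf₀.const_mul c)

lemma ofReal_intervalIntegral_eq_setLIntegral {f : ℝ → ℝ} {a b : ℝ} (hab : a ≤ b)
    (hf : IntervalIntegrable f volume a b) (hf₀ : ∀ x ∈ Ioc a b, 0 ≤ f x) :
    ENNReal.ofReal (∫ x in a..b, f x) = ∫⁻ x in Ioc a b, ENNReal.ofReal (f x) := by
  rw [intervalIntegral.integral_of_le hab,
    ofReal_integral_eq_lintegral_ofReal hf.1
      ((ae_restrict_iff' measurableSet_Ioc).2 (ae_of_all _ hf₀))]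

lemma integral_sq_le_endpoint_add_four_mul_integral {ζ : ℝ → ℝ} (hζ : ContDiff ℝ 1 ζ) {a b : ℝ}
    (hab : a ≤ b) :
    ∫ r in a..b, ζ r ^ 2
      ≤ 2 * ((b - a) * ζ b ^ 2) + 4 * ∫ r in a..b, (r - a) ^ 2 * deriv ζ r ^ 2 := by
  have hζc : Continuous ζ := hζ.continuous
  have hζ'c : Continuous (deriv ζ) := hζ.continuous_deriv le_rfl
  have hderiv (x : ℝ) : HasDerivAt (fun r => (r - a) * ζ r ^ 2)
      (ζ x ^ 2 + 2 * ((x - a) * ζ x * deriv ζ x)) x := by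
    refine (((hasDerivAt_id' x).sub_const a).fun_mul
      ((hζ.differentiable one_ne_zero x).hasDerivAt.fun_pow 2)).congr_deriv ?_
    push_cast
    ring
  have hφ : ∫ r in a..b, (ζ r ^ 2 - 4 * ((r - a) ^ 2 * deriv ζ r ^ 2)) / 2
      ≤ (b - a) * ζ b ^ 2 - (a - a) * ζ a ^ 2 :=
    intervalIntegral.integral_le_sub_of_hasDeriv_right_of_le hab
      (by fun_prop) (fun x _ => (hderiv x).hasDerivWithinAt)
      (Continuous.integrableOn_Icc (by fun_prop)) fun x _ => by
        nlinarith [sq_nonneg (ζ x + 2 * (x - a) * deriv ζ x)]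
  have hsq : IntervalIntegrable (fun r => ζ r ^ 2) volume a b :=
    Continuous.intervalIntegrable (by fun_prop) a b
  have hweighted : IntervalIntegrable (fun r => (r - a) ^ 2 * deriv ζ r ^ 2) volume a b :=
    Continuous.intervalIntegrable (by fun_prop) a b
  rw [intervalIntegral.integral_div, intervalIntegral.integral_sub hsq (hweighted.const_mul 4),
    intervalIntegral.integral_const_mul] at hφ
  linarith

lemma setLIntegral_Ioc_sq_le_endpoint_add_four_mul_lintegral {ζ : ℝ → ℝ} (hζ : ContDiff ℝ 1 ζ)
    {a b : ℝ} (hab : a ≤ b) :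
    ∫⁻ r in Ioc a b, ENNReal.ofReal (ζ r ^ 2)
      ≤ ENNReal.ofReal (2 * ((b - a) * ζ b ^ 2))
        + ENNReal.ofReal 4 * ∫⁻ r in Ioi a, ENNReal.ofReal ((r - a) ^ 2 * deriv ζ r ^ 2) := by
  have hζc : Continuous ζ := hζ.continuous
  have hζ'c : Continuous (deriv ζ) := hζ.continuous_deriv le_rfl
  have hweighted₀ (r : ℝ) : 0 ≤ (r - a) ^ 2 * deriv ζ r ^ 2 := by positivity
  rw [← ofReal_intervalIntegral_eq_setLIntegral (f := fun r => ζ r ^ 2) hab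
    (Continuous.intervalIntegrable (by fun_prop) a b) fun _ _ => sq_nonneg _]
  calc ENNReal.ofReal (∫ r in a..b, ζ r ^ 2)
      ≤ ENNReal.ofReal (2 * ((b - a) * ζ b ^ 2)
          + 4 * ∫ r in a..b, (r - a) ^ 2 * deriv ζ r ^ 2) :=
        ENNReal.ofReal_le_ofReal (integral_sq_le_endpoint_add_four_mul_integral hζ hab)
    _ = ENNReal.ofReal (2 * ((b - a) * ζ b ^ 2))
          + ENNReal.ofReal 4 * ∫⁻ r in Ioc a b, ENNReal.ofReal ((r - a) ^ 2 * deriv ζ r ^ 2) := by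
        have hint₀ := intervalIntegral.integral_nonneg (μ := volume) hab fun r _ => hweighted₀ r
        rw [ENNReal.ofReal_add (by nlinarith [sq_nonneg (ζ b)]) (by positivity),
          ENNReal.ofReal_mul (p := 4) (by norm_num), ofReal_intervalIntegral_eq_setLIntegral hab
            (Continuous.intervalIntegrable (by fun_prop) a b) fun r _ => hweighted₀ r]
    _ ≤ _ := by gcongr; exact Ioc_subset_Ioi_self

/-- Hardy inequality on `[r₀, ∞)` without boundary condition at `r₀`:
if `r ζ(r)² → 0` as `r → ∞`, then
`∫_{r₀}^∞ ζ² ≤ 4 ∫_{r₀}^∞ (r - r₀)² (ζ')²`. -/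
theorem hardy_no_boundary (r₀ : ℝ) (ζ : ℝ → ℝ) (hζ : ContDiff ℝ 1 ζ)
    (hlim : Tendsto (fun r => r * (ζ r) ^ 2) atTop (nhds 0)) :
    ∫⁻ r in Ioi r₀, ENNReal.ofReal ((ζ r) ^ 2)
      ≤ ENNReal.ofReal 4 *
        ∫⁻ r in Ioi r₀, ENNReal.ofReal ((r - r₀) ^ 2 * (deriv ζ r) ^ 2) := by
  have hboundary : Tendsto (fun R => ENNReal.ofReal (2 * ((R - r₀) * ζ R ^ 2))) atTop (𝓝 0) := by
    simpa only [mul_zero, ENNReal.ofReal_zero] using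
      ENNReal.tendsto_ofReal ((tendsto_sub_mul_atTop_of_tendsto_mul r₀ hlim).const_mul 2)
  refine le_of_tendsto_of_tendsto (tendsto_setLIntegral_Ioc_atTop _ r₀)
    (by simpa only [zero_add] using hboundary.add_const _) ?_
  filter_upwards [eventually_ge_atTop r₀] with R hR using
    setLIntegral_Ioc_sq_le_endpoint_add_four_mul_lintegral hζ hR
end

section
/- Let ζ : [0, ∞) → ℝ be continuous and positive, and let E₀, β, p, C₀ > 0 be constants. Assume: (i) for all 0 ≤ τ₁ ≤ τ₂, ζ(τ₂) + β ∫_{τ₁}^{τ₂} ζ(s) ds ≤ ζ(τ₁) + E₀ (τ₂ - τ₁)(τ₁ + 1)^{-p}; and (ii) for all 0 ≤ τ₀ ≤ τ₁ ≤ τ₂, ζ(τ₂) + β ∫_{τ₁}^{τ₂} ζ(s) ds ≤ ζ(τ₁) + C₀ (τ₂ - τ₁) ζ(τ₀). Then ζ(τ) ≤ (1 + C₀ β^{-1}) ζ(τ₀) for all τ ≥ τ₀, and there exists a constant C = C(C₀, E₀, β, p) > 0 such that ζ(τ) ≤ C (ζ(τ₀) + E₀)(1 + τ)^{-p} for all τ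 ≥ τ₀. -/
/-!
The first bound is a barrier argument: on any interval where `ζ` stays above
`(1 + C₀ / β) ζ(τ₀)`, inequality (ii) forces `ζ` to decrease.

For the decay, pick by the mean value theorem for integrals a point `c ∈ (x, 2x)` with
`x ζ(c) = ∫_x^{2x} ζ`; inequality (i) bounds `ζ(c)`, and the first bound carries this to `2x`.
For the weight `g(τ) = ζ(τ) (1 + τ)^p` this gives `g(2x) ≤ (A / x) g(x) + A E₀` with
`A = 2^p (1 + C₀ / β) / β`, a contraction once `x ≥ 2A`, so induction over the dyadic
intervals `[0, 2ⁿ · 2A]` keeps `g` bounded.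
-/

open MeasureTheory Set

theorem ContinuousOn.le_of_forall_lt_on_Ioc_imp_le {α β : Type*}
    [ConditionallyCompleteLinearOrder α] [TopologicalSpace α] [OrderTopology α]
    [LinearOrder β] [TopologicalSpace β] [OrderClosedTopology β]
    {f : α → β} {a b : α} {M : β} (hf : ContinuousOn f (Icc a b)) (hab : a ≤ b)
    (ha : f a ≤ M)
    (hdrop : ∀ t ∈ Ico a b, (∀ s ∈ Ioc t b, M < f s) → f b ≤ f t) : f b ≤ M := by
  have hclosed : IsClosed ({x | f x ≤ M} ∩ Icc a b) := by
    rw [inter_comm]; exact hf.preimage_isClosed_of_isClosed isClosed_Icc isClosed_Iic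
  refine show b ∈ {x | f x ≤ M} from
    hclosed.mem_of_ge_of_forall_exists_gt ha hab fun t ⟨ht, htab⟩ => ?_
  by_cases hgt : ∀ s ∈ Ioc t b, M < f s
  · exact ⟨b, (hdrop t htab hgt).trans ht, htab.2, le_rfl⟩
  · push Not at hgt
    obtain ⟨s, hs, hsM⟩ := hgt
    exact ⟨s, hsM, hs⟩

theorem mul_le_integral_of_forall_Ioo_le {f : ℝ → ℝ} {a b c : ℝ} (hab : a ≤ b)
    (hf : IntervalIntegrable f volume a b) (h : ∀ x ∈ Ioo a b, c ≤ f x) :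
    (b - a) * c ≤ ∫ x in a..b, f x := by
  simpa using intervalIntegral.integral_mono_on_of_le_Ioo hab intervalIntegrable_const hf h

section Dissipation

variable {ζ : ℝ → ℝ} {β C₀ : ℝ}

theorem le_one_add_mul_inv_mul_of_dissipation (hcont : Continuous ζ) (hβ : 0 < β)
    (hC₀ : 0 ≤ C₀) {a b : ℝ} (hζa : 0 ≤ ζ a) (hab : a ≤ b)
    (h : ∀ t₁ t₂, a ≤ t₁ → t₁ ≤ t₂ →
      ζ t₂ + β * ∫ s in t₁..t₂, ζ s ≤ ζ t₁ + C₀ * (t₂ - t₁) * ζ a) :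
    ζ b ≤ (1 + C₀ * β⁻¹) * ζ a := by
  have hK : ζ a ≤ (1 + C₀ * β⁻¹) * ζ a :=
    le_mul_of_one_le_left hζa (le_add_of_nonneg_right (by positivity))
  refine hcont.continuousOn.le_of_forall_lt_on_Ioc_imp_le hab hK fun t ht hgt => ?_
  have hint := mul_le_integral_of_forall_Ioo_le ht.2.le (hcont.intervalIntegrable t b)
    fun s hs => (hgt s (Ioo_subset_Ioc_self hs)).le
  have hβK : β * (1 + C₀ * β⁻¹) = β + C₀ := by field_simp
  nlinarith [h t b ht.1 ht.2.le, mul_le_mul_of_nonneg_left hint hβ.le,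
    mul_nonneg (mul_nonneg hβ.le (sub_nonneg.2 ht.2.le)) hζa]

variable {E₀ p : ℝ}

theorem le_div_sub_add_rpow_of_dissipation (hcont : Continuous ζ)
    (hpos : ∀ τ, 0 ≤ τ → 0 < ζ τ) (hβ : 0 < β) (hC₀ : 0 ≤ C₀)
    (h1 : ∀ τ₁ τ₂ : ℝ, 0 ≤ τ₁ → τ₁ ≤ τ₂ →
      ζ τ₂ + β * ∫ s in τ₁..τ₂, ζ s ≤ ζ τ₁ + E₀ * (τ₂ - τ₁) * (τ₁ + 1) ^ (-p))
    (h2 : ∀ τ₀ τ₁ τ₂ : ℝ, 0 ≤ τ₀ → τ₀ ≤ τ₁ → τ₁ ≤ τ₂ →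
      ζ τ₂ + β * ∫ s in τ₁..τ₂, ζ s ≤ ζ τ₁ + C₀ * (τ₂ - τ₁) * ζ τ₀)
    {a b : ℝ} (ha : 0 ≤ a) (hab : a < b) :
    ζ b ≤ (1 + C₀ * β⁻¹) / β * (ζ a / (b - a) + E₀ * (a + 1) ^ (-p)) := by
  have hL : 0 < b - a := sub_pos.2 hab
  obtain ⟨c, hc_mem, hc⟩ := exists_eq_interval_average hab.ne hcont.continuousOn
  rw [uIoo_of_le hab.le] at hc_mem
  obtain ⟨hac, hcb⟩ := hc_mem
  rw [interval_average_eq_div, eq_div_iff hL.ne'] at hc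
  have hζc : β * (b - a) * ζ c ≤ ζ a + E₀ * (b - a) * (a + 1) ^ (-p) := by
    nlinarith [h1 a b ha hab.le, hpos b (ha.trans hab.le)]
  have hζb := le_one_add_mul_inv_mul_of_dissipation hcont hβ hC₀ (hpos c (ha.trans hac.le)).le
    hcb.le fun t₁ t₂ => h2 c t₁ t₂ (ha.trans hac.le)
  calc ζ b ≤ (1 + C₀ * β⁻¹) * ζ c := hζb
    _ ≤ (1 + C₀ * β⁻¹) * ((ζ a + E₀ * (b - a) * (a + 1) ^ (-p)) / (β * (b - a))) := by
        gcongr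
        rw [le_div_iff₀ (by positivity)]
        linarith
    _ = _ := by field_simp

theorem mul_rpow_two_mul_le_of_dissipation (hcont : Continuous ζ)
    (hpos : ∀ τ, 0 ≤ τ → 0 < ζ τ) (hβ : 0 < β) (hp : 0 ≤ p) (hC₀ : 0 ≤ C₀)
    (h1 : ∀ τ₁ τ₂ : ℝ, 0 ≤ τ₁ → τ₁ ≤ τ₂ →
      ζ τ₂ + β * ∫ s in τ₁..τ₂, ζ s ≤ ζ τ₁ + E₀ * (τ₂ - τ₁) * (τ₁ + 1) ^ (-p))
    (h2 : ∀ τ₀ τ₁ τ₂ : ℝ, 0 ≤ τ₀ → τ₀ ≤ τ₁ → τ₁ ≤ τ₂ →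
      ζ τ₂ + β * ∫ s in τ₁..τ₂, ζ s ≤ ζ τ₁ + C₀ * (τ₂ - τ₁) * ζ τ₀)
    {x : ℝ} (hx : 0 < x) :
    ζ (2 * x) * (1 + 2 * x) ^ p ≤
      (1 + C₀ * β⁻¹) / β * 2 ^ p / x * (ζ x * (1 + x) ^ p) +
        (1 + C₀ * β⁻¹) / β * 2 ^ p * E₀ := by
  have hstep := le_div_sub_add_rpow_of_dissipation hcont hpos hβ hC₀ h1 h2 hx.le
    (by linarith : x < 2 * x)
  have hw : 0 < (x + 1) ^ p := by positivity
  rw [show 2 * x - x = x by ring, Real.rpow_neg (by positivity)] at hstep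
  have hgrowth : (1 + 2 * x) ^ p ≤ 2 ^ p * (x + 1) ^ p := by
    rw [← Real.mul_rpow (by norm_num) (by positivity)]
    exact Real.rpow_le_rpow (by positivity) (by linarith) hp
  calc ζ (2 * x) * (1 + 2 * x) ^ p ≤ ζ (2 * x) * (2 ^ p * (x + 1) ^ p) := by
        gcongr
        exact (hpos _ (by positivity)).le
    _ ≤ (1 + C₀ * β⁻¹) / β * (ζ x / x + E₀ * ((x + 1) ^ p)⁻¹) * (2 ^ p * (x + 1) ^ p) := by
        gcongr
    _ = _ := by
        rw [add_comm x 1]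
        field_simp

theorem le_of_map_two_mul_le_half_add {g : ℝ → ℝ} {T B : ℝ} (hT : 0 < T)
    (hbase : ∀ x ∈ Icc 0 (2 * T), g x ≤ B)
    (hstep : ∀ x, T ≤ x → g (2 * x) ≤ g x / 2 + B / 2)
    {x : ℝ} (hx : 0 ≤ x) : g x ≤ B := by
  have hdyadic : ∀ n : ℕ, ∀ x ∈ Icc 0 (2 ^ n * T), g x ≤ B := by
    intro n
    induction n with
    | zero => exact fun x hx => hbase x ⟨hx.1, by linarith [hx.2]⟩
    | succ n ih =>
      rintro x ⟨hx0, hxn⟩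
      rcases le_or_gt x (2 * T) with hle | hgt
      · exact hbase x ⟨hx0, hle⟩
      · have hx2 := hstep (x / 2) (by linarith)
        rw [mul_div_cancel₀ x two_ne_zero] at hx2
        have := ih (x / 2) ⟨by positivity, by rw [pow_succ] at hxn; linarith⟩
        linarith
  obtain ⟨n, hn⟩ := pow_unbounded_of_one_lt (x / T) one_lt_two
  exact hdyadic n x ⟨hx, ((div_lt_iff₀ hT).1 hn).le⟩

theorem exists_forall_mul_rpow_le_of_dissipation (hcont : Continuous ζ)
    (hpos : ∀ τ, 0 ≤ τ → 0 < ζ τ) (hβ : 0 < β) (hp : 0 ≤ p) (hC₀ : 0 ≤ C₀)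
    (h1 : ∀ τ₁ τ₂ : ℝ, 0 ≤ τ₁ → τ₁ ≤ τ₂ →
      ζ τ₂ + β * ∫ s in τ₁..τ₂, ζ s ≤ ζ τ₁ + E₀ * (τ₂ - τ₁) * (τ₁ + 1) ^ (-p))
    (h2 : ∀ τ₀ τ₁ τ₂ : ℝ, 0 ≤ τ₀ → τ₀ ≤ τ₁ → τ₁ ≤ τ₂ →
      ζ τ₂ + β * ∫ s in τ₁..τ₂, ζ s ≤ ζ τ₁ + C₀ * (τ₂ - τ₁) * ζ τ₀) :
    ∃ B, 0 < B ∧ ∀ τ, 0 ≤ τ → ζ τ * (1 + τ) ^ p ≤ B := by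
  set A := (1 + C₀ * β⁻¹) / β * 2 ^ p
  have hA : 0 < A := by positivity
  have hζ0 := hpos 0 le_rfl
  set B := max ((1 + C₀ * β⁻¹) * ζ 0 * (1 + 4 * A) ^ p) (2 * A * E₀)
  refine ⟨B, lt_max_of_lt_left (by positivity), fun τ hτ => ?_⟩
  refine le_of_map_two_mul_le_half_add (g := fun τ => ζ τ * (1 + τ) ^ p)
    (by positivity : 0 < 2 * A) (fun x hx => le_max_of_le_left ?_) (fun x hx => ?_) hτ
  · have hx1 : 0 ≤ 1 + x := by linarith [hx.1]
    exact mul_le_mul (le_one_add_mul_inv_mul_of_dissipation hcont hβ hC₀ hζ0.le hx.1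
        fun t₁ t₂ => h2 0 t₁ t₂ le_rfl)
      (Real.rpow_le_rpow hx1 (by linarith [hx.2]) hp) (by positivity) (by positivity)
  · have hx0 : 0 < x := by linarith
    have hcontract : A / x * (ζ x * (1 + x) ^ p) ≤ ζ x * (1 + x) ^ p / 2 := by
      have : A / x ≤ 1 / 2 := by rw [div_le_iff₀ hx0]; linarith
      nlinarith [mul_pos (hpos x hx0.le) (Real.rpow_pos_of_pos (by linarith : 0 < 1 + x) p)]
    have hsource : 2 * A * E₀ ≤ B := le_max_right _ _
    linarith [mul_rpow_two_mul_le_of_dissipation hcont hpos hβ hp hC₀ h1 h2 hx0]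

end Dissipation

/-- Grönwall-type iteration lemma: a continuous positive function satisfying the two
integrated inequalities is uniformly bounded by its value at `τ₀` and decays like
`(1+τ)^{-p}`. -/
theorem gronwall_decay (ζ : ℝ → ℝ) (hcont : Continuous ζ)
    (hpos : ∀ τ : ℝ, 0 ≤ τ → 0 < ζ τ)
    (E₀ β p C₀ : ℝ) (hE₀ : 0 < E₀) (hβ : 0 < β) (hp : 0 < p) (hC₀ : 0 < C₀)
    (h1 : ∀ τ₁ τ₂ : ℝ, 0 ≤ τ₁ → τ₁ ≤ τ₂ →
      ζ τ₂ + β * ∫ s in τ₁..τ₂, ζ s ≤ ζ τ₁ + E₀ * (τ₂ - τ₁) * (τ₁ + 1) ^ (-p))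
    (h2 : ∀ τ₀ τ₁ τ₂ : ℝ, 0 ≤ τ₀ → τ₀ ≤ τ₁ → τ₁ ≤ τ₂ →
      ζ τ₂ + β * ∫ s in τ₁..τ₂, ζ s ≤ ζ τ₁ + C₀ * (τ₂ - τ₁) * ζ τ₀) :
    (∀ τ₀ τ : ℝ, 0 ≤ τ₀ → τ₀ ≤ τ → ζ τ ≤ (1 + C₀ * β⁻¹) * ζ τ₀) ∧
    ∃ C : ℝ, 0 < C ∧ ∀ τ₀ τ : ℝ, 0 ≤ τ₀ → τ₀ ≤ τ →
      ζ τ ≤ C * (ζ τ₀ + E₀) * (1 + τ) ^ (-p) := by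
  refine ⟨fun τ₀ τ h0 hle => le_one_add_mul_inv_mul_of_dissipation hcont hβ hC₀.le
    (hpos τ₀ h0).le hle fun t₁ t₂ => h2 τ₀ t₁ t₂ h0, ?_⟩
  obtain ⟨B, hB, hweighted⟩ :=
    exists_forall_mul_rpow_le_of_dissipation hcont hpos hβ hp.le hC₀.le h1 h2
  refine ⟨B / E₀, by positivity, fun τ₀ τ h0 hle => ?_⟩
  have hτ : 0 < 1 + τ := by linarith
  calc ζ τ = ζ τ * (1 + τ) ^ p * (1 + τ) ^ (-p) := by
        rw [mul_assoc, ← Real.rpow_add hτ, add_neg_cancel, Real.rpow_zero, mul_one]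
    _ ≤ B / E₀ * (ζ τ₀ + E₀) * (1 + τ) ^ (-p) := by
        refine mul_le_mul_of_nonneg_right ((hweighted τ (h0.trans hle)).trans ?_) (by positivity)
        rw [div_mul_eq_mul_div, le_div_iff₀ hE₀]
        nlinarith [hpos τ₀ h0]
end
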